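/- Let d_s > 0 be a real number (the planned duration of the suffix cycle), let n ≥ 1, and let t : Fin n → ℝ be the planned satisfaction offsets within one suffix cycle, satisfying 0 ≤ t 0 < t 1 < ⋯ < t (n−1) ≤ d_s. Let J := max( max_{k < n−1} (t (k+1) − t k), d_s + t 0 − t (n−1) ) be the planned maximum time between consecutive satisfactions. Let ρ̲, ρ̄ be reals with 0 < ρ̲ ≤ 1 ≤ ρ̄. Suppose S : ℕ → ℝ gives the actual start times of the suffix cycles, with S (j+1) − S j ≤ ρ̄ · d_s for all j, and suppose τ : ℕ → Fin n → ℝ gives the actual satisfaction times, with S j + ρ̲ · t k ≤ τ j k ≤ S j + ρ̄ · t k for all j and k. Then every gap between consecutive actual satisfaction instants is bounded by ρ̄·J + (ρ̄ − ρ̲)·d_s; that is, for all j and all k < n−1, τ j (k+1) − τ j k ≤ ρ̄·J + (ρ̄ − ρ̲)·d_s, and for all j, τ (j+1) 0 − τ j (n−1) ≤ ρ̄·J + (ρ̄ − ρ̲)·d_s. Consequently the field value of the cost satisfies J(T̃^π) ≤ J(T^π)·ρ̄ + d_s·(ρ̄ − ρ̲). (Proposition 3.) -/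

import Mathlib

/-!
The later event of a consecutive pair is stretched by at most the factor `ρ̄` from its cycle start,
the earlier one shrunk by at most `ρ̲`, and global synchronization delays the next cycle start by
at most `ρ̄·d_s`. Hence an actual gap exceeds `ρ̄` times the planned gap by at most `(ρ̄ - ρ̲)·b`,
where `b ≤ d_s` is the planned offset of the earlier event.
-/

/-- The earlier event has planned offset `b` in a cycle starting at `S`, the later one offset `a`
in a cycle starting at `S'`; `c` is the planned time between the two cycle starts. -/
lemma actual_gap_le {ρl ρu S S' c a b x y J ds : ℝ} (hρ : ρl ≤ ρu) (hρu : 0 ≤ ρu)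
    (hS : S' - S ≤ ρu * c) (hx : x ≤ S' + ρu * a) (hy : S + ρl * b ≤ y)
    (hJ : c + a - b ≤ J) (hb : b ≤ ds) :
    x - y ≤ ρu * J + (ρu - ρl) * ds := by
  have hstretch : ρu * (c + a - b) ≤ ρu * J := mul_le_mul_of_nonneg_left hJ hρu
  have hdrift : (ρu - ρl) * b ≤ (ρu - ρl) * ds := mul_le_mul_of_nonneg_left hb (sub_nonneg.2 hρ)
  linarith

/-- Proposition 3: if all robots synchronize globally at the beginning of
each suffix cycle, then every gap between consecutive actual satisfaction
instants of the optimizing proposition is bounded by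
`ρ̄·J + (ρ̄ - ρ̲)·d_s`, where `J` is the planned maximum gap. -/
theorem field_cost_bound
    (ds : ℝ)
    (n : ℕ) (hn : 0 < n)
    (t : Fin n → ℝ) (htmono : StrictMono t)
    (htlast : t ⟨n - 1, by omega⟩ ≤ ds)
    (ρl ρu : ℝ) (hρl1 : ρl ≤ 1) (hρu : 1 ≤ ρu)
    (J : ℝ)
    (hJ : J = Finset.univ.sup' (Finset.univ_nonempty_iff.mpr ⟨⟨0, hn⟩⟩)
      (fun k : Fin n =>
        if h : (k : ℕ) + 1 < n then t ⟨(k : ℕ) + 1, h⟩ - t k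
        else ds + t ⟨0, hn⟩ - t ⟨n - 1, by omega⟩))
    (S : ℕ → ℝ) (hS : ∀ j, S (j + 1) - S j ≤ ρu * ds)
    (τ : ℕ → Fin n → ℝ)
    (hτ : ∀ j k, S j + ρl * t k ≤ τ j k ∧ τ j k ≤ S j + ρu * t k) :
    (∀ j : ℕ, ∀ k : ℕ, ∀ hk : k + 1 < n,
      τ j ⟨k + 1, hk⟩ - τ j ⟨k, by omega⟩ ≤ ρu * J + (ρu - ρl) * ds) ∧
    (∀ j : ℕ,
      τ (j + 1) ⟨0, hn⟩ - τ j ⟨n - 1, by omega⟩ ≤ ρu * J + (ρu - ρl) * ds) := by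
  have hρ : ρl ≤ ρu := hρl1.trans hρu
  have hρu0 : 0 ≤ ρu := zero_le_one.trans hρu
  have ht_le : ∀ k, t k ≤ ds := fun k =>
    (htmono.monotone (Fin.le_def.2 (by simp only; omega))).trans htlast
  have hJ_ge := fun k => hJ ▸ Finset.le_sup' _ (Finset.mem_univ k)
  refine ⟨fun j k hk => ?_, fun j => ?_⟩
  · refine actual_gap_le (c := 0) hρ hρu0 (by simp) (hτ j _).2 (hτ j _).1 ?_ (ht_le _)
    simpa [hk] using hJ_ge ⟨k, by omega⟩
  · refine actual_gap_le hρ hρu0 (hS j) (hτ (j + 1) _).2 (hτ j _).1 ?_ (ht_le _)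
    simpa [show ¬n - 1 + 1 < n by omega] using hJ_ge ⟨n - 1, by omega⟩
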